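/- arXiv:2402.16818 — 4 statements merged into one kernel-verified Lean document; each statement's English description precedes it below -/
import Mathlib

section
/- Let F be a graph on k vertices, v ∈ V(F), t ≥ 1, and let H be the graph obtained from F by adding t−1 new copies of v (each new vertex adjacent to exactly the neighbors of v, and the copies of v pairwise nonadjacent). If G is an n-vertex graph in which the number of ordered copies of F equals x · n^{k−1} with x ≥ 4t, then the number of ordered copies of H in G is at least (1/2^t) · x^t · n^{k−1}. -/
/-!
Group the copies by their restriction `w` to `F - v`, itself a copy of `F - v` in `G`. Over `w`,
the vertex `v` can go to any of the `d(w)` vertices outside the image of `w` that are adjacent to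
the images of all neighbours of `v`; since the copies of `v` are pairwise nonadjacent, the `t`
copies of `v` in `H` can go to any `t` distinct such vertices. So `#F = ∑ d(w)` and
`#H = ∑ d(w) (d(w) - 1) ⋯ (d(w) - t + 1) ≥ ∑ (d(w) - t)₊ ^ t`. There are at most `n ^ (k - 1)`
maps `w`, so by the power mean inequality the last sum is at least
`(x - t) ^ t n ^ (k - 1) ≥ (x / 2) ^ t n ^ (k - 1)`.
-/

open SimpleGraph Finset

/-- The number of labelled (ordered) copies of `F` in `G`: injective maps sending edges to edges. -/
noncomputable def labelledCopyCount {α β : Type*} (F : SimpleGraph α) (G : SimpleGraph β) : ℕ :=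
  Nat.card {f : α ↪ β // ∀ a b, F.Adj a b → G.Adj (f a) (f b)}

/-- The graph obtained from `F` by adding `t` new copies of the vertex `v`: each new
vertex is adjacent exactly to the neighbours of `v`, and the new vertices (together with `v`)
are pairwise nonadjacent. -/
def addCopies {α : Type*} (F : SimpleGraph α) (v : α) (t : ℕ) : SimpleGraph (α ⊕ Fin t) where
  Adj x y :=
    match x, y with
    | Sum.inl a, Sum.inl b => F.Adj a b
    | Sum.inl a, Sum.inr _ => F.Adj a v
    | Sum.inr _, Sum.inl b => F.Adj v b
    | Sum.inr _, Sum.inr _ => False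
  symm := by
    refine ⟨?_⟩
    rintro (a | i) (b | j) h
    · exact h.symm
    · exact h.symm
    · exact h.symm
    · exact h.elim
  loopless := by
    refine ⟨?_⟩
    rintro (a | i) h
    · exact F.irrefl h
    · exact h

theorem pow_div_two_pow_mul_le_sum_descFactorial {ι : Type*} [Fintype ι] (d : ι → ℕ) {t : ℕ}
    (ht : 1 ≤ t) {x N : ℝ} (hN : (Fintype.card ι : ℝ) ≤ N) (hx : 2 * t ≤ x)
    (hsum : ∑ i, (d i : ℝ) = x * N) :
    x ^ t / 2 ^ t * N ≤ ∑ i, ((d i).descFactorial t : ℝ) := by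
  obtain ⟨s, rfl⟩ : ∃ s, t = s + 1 := ⟨t - 1, by omega⟩
  push_cast at hx ⊢
  have hxs : 0 ≤ x - (s + 1) := by linarith
  have hN0 : 0 ≤ N := (Nat.cast_nonneg _).trans hN
  rcases (Fintype.card ι).eq_zero_or_pos with hcard0 | hcard_pos
  · have : IsEmpty ι := Fintype.card_eq_zero_iff.1 hcard0
    have hN_eq : N = 0 := by simpa [show x ≠ 0 by linarith] using hsum.symm
    simp [hN_eq]
  -- the positive part `(d i - t)₊`, via truncated subtraction in `ℕ`
  set e : ι → ℝ := fun i ↦ ((d i - (s + 1) : ℕ) : ℝ)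
  have hsum_e : (x - (s + 1)) * N ≤ ∑ i, e i := by
    have hd : ∀ i, (d i : ℝ) ≤ e i + ((s : ℝ) + 1) := fun i ↦ by
      have : d i ≤ d i - (s + 1) + (s + 1) := le_tsub_add
      simp only [e]
      exact_mod_cast this
    have := Finset.sum_le_sum fun i (_ : i ∈ univ) ↦ hd i
    rw [sum_add_distrib, sum_const, card_univ, nsmul_eq_mul, hsum] at this
    nlinarith
  have hpow := pow_sum_div_card_le_sum_pow (s := univ) (f := e) (fun i _ ↦ Nat.cast_nonneg _) s
  rw [card_univ] at hpow
  calc x ^ (s + 1) / 2 ^ (s + 1) * N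
      ≤ (x - (s + 1)) ^ (s + 1) * N := by
        rw [← div_pow]
        gcongr <;> linarith
    _ ≤ ((x - (s + 1)) * N) ^ (s + 1) / Fintype.card ι ^ s := by
        rw [le_div_iff₀ (by positivity), mul_pow, pow_succ' N, mul_assoc]
        gcongr
    _ ≤ (∑ i, e i) ^ (s + 1) / Fintype.card ι ^ s := by gcongr
    _ ≤ ∑ i, e i ^ (s + 1) := hpow
    _ ≤ ∑ i, ((d i).descFactorial (s + 1) : ℝ) := by
        gcongr with i
        have : (d i - (s + 1)) ^ (s + 1) ≤ (d i).descFactorial (s + 1) :=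
          (Nat.pow_le_pow_left (by omega) _).trans (Nat.pow_sub_le_descFactorial (d i) (s + 1))
        simp only [e]
        exact_mod_cast this

theorem Nat.card_embedding {α β : Type*} [Finite α] [Finite β] :
    Nat.card (α ↪ β) = (Nat.card β).descFactorial (Nat.card α) := by
  classical
  have := Fintype.ofFinite α
  have := Fintype.ofFinite β
  simp only [Nat.card_eq_fintype_card, Fintype.card_embedding_eq]

theorem labelledCopyCount_eq_natCard_copy {α β : Type*} (F : SimpleGraph α)
    (G : SimpleGraph β) : labelledCopyCount F G = Nat.card (Copy F G) :=
  Nat.card_congr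
    { toFun f := ⟨⟨f.1, f.2 _ _⟩, f.1.injective⟩
      invFun c := ⟨c.toEmbedding, fun _ _ h ↦ c.toHom.map_adj h⟩ }

namespace SimpleGraph

variable {α β V : Type*}

theorem Copy.natCard_le_pow [Finite α] [Finite V] (A : SimpleGraph α) (G : SimpleGraph V) :
    Nat.card (Copy A G) ≤ Nat.card V ^ Nat.card α :=
  calc Nat.card (Copy A G) ≤ Nat.card (α ↪ V) :=
        Nat.card_le_card_of_injective Copy.toEmbedding fun _ _ h ↦
          Copy.ext (DFunLike.congr_fun h : _)
    _ ≤ Nat.card V ^ Nat.card α :=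
        Nat.card_embedding (α := α) (β := V) ▸ Nat.descFactorial_le_pow _ _

def Iso.copyEquiv {A : SimpleGraph α} {B : SimpleGraph β} (e : A ≃g B) (G : SimpleGraph V) :
    Copy A G ≃ Copy B G where
  toFun f := f.comp e.symm.toCopy
  invFun g := g.comp e.toCopy
  left_inv f := by ext; simp [Copy.comp_apply]
  right_inv g := by ext; simp [Copy.comp_apply]

def attachIndep (F : SimpleGraph β) (N : Set β) (ι : Type*) : SimpleGraph (β ⊕ ι) where
  Adj
    | .inl a, .inl b => F.Adj a b
    | .inl a, .inr _ => a ∈ N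
    | .inr _, .inl b => b ∈ N
    | .inr _, .inr _ => False
  symm := ⟨by rintro (a | i) (b | j) h <;> first | exact h.symm | exact h⟩
  loopless := ⟨by rintro (a | i) h; exacts [F.irrefl h, h]⟩

section attachIndep

variable {ι : Type*} {F : SimpleGraph β} {N : Set β} {G : SimpleGraph V}

def Copy.extensionSet (w : Copy F G) (N : Set β) : Set V :=
  {u | u ∉ Set.range w ∧ ∀ a ∈ N, G.Adj (w a) u}

def copyAttachIndepEquiv :
    Copy (F.attachIndep N ι) G ≃ Σ w : Copy F G, ι ↪ w.extensionSet N where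
  toFun f := ⟨⟨⟨f ∘ Sum.inl, fun h ↦ f.toHom.map_adj h⟩, f.injective.comp Sum.inl_injective⟩,
    ⟨fun i ↦ ⟨f (.inr i), by
      refine ⟨?_, fun a ha ↦ f.toHom.map_adj (show (F.attachIndep N ι).Adj _ _ from ha)⟩
      rintro ⟨a, ha⟩
      exact Sum.inl_ne_inr (f.injective ha)⟩,
     fun i j h ↦ Sum.inr_injective (f.injective (congrArg Subtype.val h))⟩⟩
  invFun p := ⟨⟨Sum.elim p.1 (fun i ↦ p.2 i), by
      rintro (a | i) (b | j) h
      · exact p.1.toHom.map_adj h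
      · exact (p.2 j).2.2 a h
      · exact ((p.2 i).2.2 b h).symm
      · exact h.elim⟩, by
      rintro (a | i) (b | j) h
      · exact congrArg _ (p.1.injective h)
      · exact ((p.2 j).2.1 ⟨a, h⟩).elim
      · exact ((p.2 i).2.1 ⟨b, h.symm⟩).elim
      · exact congrArg _ (p.2.injective (Subtype.ext h))⟩
  left_inv f := by ext (a | i) <;> rfl
  right_inv p := rfl

theorem natCard_copy_attachIndep [Finite ι] [Finite V] [Fintype (Copy F G)] :
    Nat.card (Copy (F.attachIndep N ι) G) =
      ∑ w : Copy F G, (Nat.card (w.extensionSet N)).descFactorial (Nat.card ι) := by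
  rw [Nat.card_congr copyAttachIndepEquiv, Nat.card_sigma]
  exact sum_congr rfl fun w _ ↦ Nat.card_embedding

end attachIndep

def addCopiesZeroIso (F : SimpleGraph α) (v : α) : addCopies F v 0 ≃g F where
  toEquiv := Equiv.sumEmpty α (Fin 0)
  map_rel_iff' {a b} := by
    rcases a with a | i
    · rcases b with b | j
      · rfl
      · exact j.elim0
    · exact i.elim0

def addCopiesEquiv [DecidableEq α] (v : α) (s : ℕ) :
    α ⊕ Fin s ≃ ({v}ᶜ : Set α) ⊕ Fin (s + 1) where
  toFun
    | .inl a => if h : a = v then .inr 0 else .inl ⟨a, h⟩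
    | .inr i => .inr i.succ
  invFun
    | .inl a => .inl a
    | .inr j => (Fin.cons (.inl v) .inr : Fin (s + 1) → α ⊕ Fin s) j
  left_inv := by
    rintro (a | i)
    · by_cases h : a = v <;> simp [h]
    · simp
  right_inv := by
    rintro (⟨a, ha⟩ | j)
    · exact dif_neg ha
    · cases j using Fin.cases <;> simp

def addCopiesIso [DecidableEq α] (F : SimpleGraph α) (v : α) (s : ℕ) :
    addCopies F v s ≃g attachIndep (F.induce {v}ᶜ) {a | F.Adj a v} (Fin (s + 1)) where
  toEquiv := addCopiesEquiv v s
  map_rel_iff' {a b} := by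
    rcases a with a | i <;> rcases b with b | j
    · by_cases ha : a = v <;> by_cases hb : b = v <;>
        simp [addCopiesEquiv, addCopies, attachIndep, ha, hb, F.adj_comm b]
    · by_cases ha : a = v <;> simp [addCopiesEquiv, addCopies, attachIndep, ha]
    · by_cases hb : b = v <;> simp [addCopiesEquiv, addCopies, attachIndep, hb, F.adj_comm v]
    · simp [addCopiesEquiv, addCopies, attachIndep]

end SimpleGraph

/-- Lemma 2.2: if `F` has `k` vertices, `H` is obtained from `F` by adding `t - 1` new
copies of a vertex `v`, and an `n`-vertex graph `G` contains `x ⬝ n^(k-1)` ordered copies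
of `F` with `x ≥ 4t`, then `G` contains at least `x^t ⬝ n^(k-1) / 2^t` ordered copies
of `H`. -/
theorem labelledCopyCount_addCopies_lower {α : Type*} [Fintype α]
    (F : SimpleGraph α) (v : α) (t : ℕ) (ht : 1 ≤ t) (n k : ℕ)
    (hk : Fintype.card α = k) (G : SimpleGraph (Fin n)) (x : ℝ)
    (hx : 4 * t ≤ x)
    (hF : (_root_.labelledCopyCount F G : ℝ) = x * (n : ℝ) ^ (k - 1)) :
    (1 / 2 ^ t) * x ^ t * (n : ℝ) ^ (k - 1) ≤
      (_root_.labelledCopyCount (addCopies F v (t - 1)) G : ℝ) := by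
  classical
  let c (w : Copy (F.induce {v}ᶜ) G) : ℕ := Nat.card (w.extensionSet {a | F.Adj a v})
  have hcount (s : ℕ) :
      _root_.labelledCopyCount (addCopies F v s) G = ∑ w, (c w).descFactorial (s + 1) := by
    rw [labelledCopyCount_eq_natCard_copy, Nat.card_congr ((addCopiesIso F v s).copyEquiv G),
      natCard_copy_attachIndep, Nat.card_eq_fintype_card, Fintype.card_fin]
  have hcopies : _root_.labelledCopyCount F G = ∑ w, c w := by
    rw [labelledCopyCount_eq_natCard_copy, ← Nat.card_congr ((addCopiesZeroIso F v).copyEquiv G),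
      ← labelledCopyCount_eq_natCard_copy, hcount 0]
    simp only [zero_add, Nat.descFactorial_one]
  have hw : (Fintype.card (Copy (F.induce {v}ᶜ) G) : ℝ) ≤ n ^ (k - 1) := by
    have hcard : Nat.card ({v}ᶜ : Set α) = k - 1 := by simp [← hk, Finset.filter_ne']
    have := Copy.natCard_le_pow (F.induce {v}ᶜ) G
    rw [hcard, Nat.card_eq_fintype_card, Nat.card_eq_fintype_card, Fintype.card_fin] at this
    exact_mod_cast this
  obtain ⟨s, rfl⟩ : ∃ s, t = s + 1 := ⟨t - 1, by omega⟩
  rw [Nat.add_sub_cancel, hcount, one_div_mul_eq_div]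
  push_cast
  refine pow_div_two_pow_mul_le_sum_descFactorial c ht hw (by push_cast at hx ⊢; linarith) ?_
  rw [← hF, hcopies]
  push_cast
  rfl
end

section
/- For every r ≥ 3 and positive integers s_1 ≤ s_2 ≤ … ≤ s_r, ex(n, K_r, K_{s_1,…,s_r}) ≥ ⌊n/2⌋ · ex(⌈n/2⌉, K_{r−1}, K_{s_1,…,s_{r−1}}). -/
/-!
Join an extremal `K_{s_1,…,s_{r-1}}`-free graph `G₀` on `⌈n/2⌉` vertices to an independent set of
`⌊n/2⌋` vertices. Each vertex of the independent set extends each `(r-1)`-clique of `G₀` to an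
`r`-clique. A copy of `K_{s_1,…,s_r}` in the join meets the independent set inside a single part,
since vertices of distinct parts are adjacent; the other `r - 1` parts, which by monotonicity have
at least `s_1, …, s_{r-1}` vertices, would then form a copy of `K_{s_1,…,s_{r-1}}` in `G₀`.
-/

open SimpleGraph Finset

/-- `G` is `H`-free: there is no copy of `H` in `G` as a subgraph. -/
def Free {α β : Type*} (H : SimpleGraph α) (G : SimpleGraph β) : Prop :=
  ¬ ∃ f : α ↪ β, ∀ a b, H.Adj a b → G.Adj (f a) (f b)

/-- Number of (unordered) copies of `F` in `G`: subgraphs of `G` isomorphic to `F`. -/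
noncomputable def copyCount {α β : Type*} (F : SimpleGraph α) (G : SimpleGraph β) : ℕ :=
  Nat.card {H : G.Subgraph // Nonempty (H.coe ≃g F)}

/-- The generalized Turán number: maximum number of copies of `F` in an `n`-vertex
`H`-free graph. -/
noncomputable def exGen {α β : Type*} (n : ℕ) (F : SimpleGraph α) (H : SimpleGraph β) : ℕ :=
  sSup {N | ∃ G : SimpleGraph (Fin n), _root_.Free H G ∧ copyCount F G = N}

/-- The complete multipartite graph with `r` parts of sizes `s 0, …, s (r-1)`. -/
def multipartite (r : ℕ) (s : Fin r → ℕ) : SimpleGraph (Σ i : Fin r, Fin (s i)) :=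
  completeMultipartiteGraph fun i => Fin (s i)

theorem free_iff_not_isContained {α β : Type*} {H : SimpleGraph α} {G : SimpleGraph β} :
    _root_.Free H G ↔ ¬ H ⊑ G :=
  not_congr ⟨fun ⟨f, hf⟩ ↦ ⟨⟨⟨f, hf _ _⟩, f.injective⟩⟩,
    fun ⟨c⟩ ↦ ⟨c.toEmbedding, fun _ _ ↦ c.toHom.map_adj⟩⟩

namespace SimpleGraph

namespace Subgraph

variable {V W : Type*} {G : SimpleGraph V} {G' : SimpleGraph W}

lemma map_injective {f : G →g G'} (hf : Function.Injective f) :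
    Function.Injective (Subgraph.map f) := by
  intro H₁ H₂ h
  ext a b
  · simpa [hf.mem_set_image] using congrArg (f a ∈ ·.verts) h
  · simpa [Relation.map_apply, hf.eq_iff] using congrArg (·.Adj (f a) (f b)) h

lemma adj_of_coe_eq_top {H : G.Subgraph} (h : H.coe = ⊤) {a b : V} (ha : a ∈ H.verts)
    (hb : b ∈ H.verts) (hab : a ≠ b) : H.Adj a b := by
  have : H.coe.Adj ⟨a, ha⟩ ⟨b, hb⟩ := by
    rw [h]
    exact fun e ↦ hab (congrArg Subtype.val e)
  exact this

lemma eq_induce_verts_of_coe_eq_top {H : G.Subgraph} (h : H.coe = ⊤) :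
    H = (⊤ : G.Subgraph).induce H.verts := by
  ext a b
  · rfl
  · exact ⟨fun hab ↦ ⟨hab.fst_mem, hab.snd_mem, H.adj_sub hab⟩,
      fun ⟨ha, hb, hab⟩ ↦ adj_of_coe_eq_top h ha hb hab.ne⟩

end Subgraph

variable {α β V : Type*}

lemma IsClique.coe_induce_eq_top {G : SimpleGraph V} {s : Set V} (hs : G.IsClique s) :
    ((⊤ : G.Subgraph).induce s).coe = ⊤ := by
  ext ⟨a, ha⟩ ⟨b, hb⟩
  simp only [Subgraph.coe_adj, Subgraph.induce_adj, Subgraph.top_adj, top_adj, ne_eq,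
    Subtype.mk.injEq]
  exact ⟨fun h ↦ h.2.2.ne, fun h ↦ ⟨ha, hb, hs ha hb h⟩⟩

def join (G : SimpleGraph α) (H : SimpleGraph β) : SimpleGraph (α ⊕ β) :=
  (G ⊕g H) ⊔ completeBipartiteGraph α β

section Join

variable {G : SimpleGraph α} {H : SimpleGraph β}

@[simp] lemma join_adj_inl_inl {a a' : α} : (join G H).Adj (.inl a) (.inl a') ↔ G.Adj a a' := by
  simp [join]

@[simp] lemma join_adj_inr_inr {b b' : β} : (join G H).Adj (.inr b) (.inr b') ↔ H.Adj b b' := by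
  simp [join]

@[simp] lemma join_adj_inl_inr (a : α) (b : β) : (join G H).Adj (.inl a) (.inr b) := by
  simp [join]

lemma IsNClique.insert_inl_map_inr [DecidableEq α] [DecidableEq β] (a : α) {k : ℕ}
    {s : Finset β} (hs : H.IsNClique k s) :
    (join G H).IsNClique (k + 1) (insert (Sum.inl a) (s.map .inr)) := by
  refine IsNClique.insert (hs.map.mono ?_) ?_
  · rintro _ _ ⟨-, b, b', hbb', rfl, rfl⟩
    simpa using hbb'
  · simp

lemma card_mul_card_cliqueSet_le_card_cliqueSet_join [Finite α] [Finite β] (G : SimpleGraph α)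
    (H : SimpleGraph β) (k : ℕ) :
    Nat.card α * Nat.card (H.cliqueSet k) ≤ Nat.card ((join G H).cliqueSet (k + 1)) := by
  classical
  rw [← Nat.card_prod]
  refine Nat.card_le_card_of_injective
    (fun p ↦ ⟨insert (Sum.inl p.1) (p.2.1.map .inr), p.2.2.insert_inl_map_inr p.1⟩) ?_
  rintro ⟨a, s, hs⟩ ⟨a', s', hs'⟩ h
  have h : insert (Sum.inl a) (s.map .inr) = insert (Sum.inl a') (s'.map .inr) :=
    congrArg Subtype.val h
  have ha : a = a' := by simpa using (Finset.ext_iff.1 h (.inl a)).1 (by simp)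
  have hs : s = s' := Finset.ext fun b ↦ by simpa using Finset.ext_iff.1 h (.inr b)
  subst ha hs
  rfl

lemma isContained_of_copy_join {γ : Type*} {A : SimpleGraph γ} (c : Copy A (join G H))
    (hc : ∀ x, (c x).isRight) : A ⊑ H := by
  refine ⟨⟨⟨fun x ↦ (c x).getRight (hc x), fun {x y} hxy ↦ ?_⟩, fun x y hxy ↦ c.injective ?_⟩⟩
  · rw [← join_adj_inr_inr (G := G), Sum.inr_getRight, Sum.inr_getRight]
    exact c.toHom.map_adj hxy
  · simpa using congrArg (Sum.inr (α := α)) hxy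

lemma exists_part_isRight_of_copy_join_bot {ι : Type*} [Nonempty ι] {V : ι → Type*}
    (c : Copy (completeMultipartiteGraph V) (join (⊥ : SimpleGraph α) H)) :
    ∃ j, ∀ x, x.1 ≠ j → (c x).isRight := by
  by_cases h : ∃ x₀, (c x₀).isLeft
  · obtain ⟨x₀, hx₀⟩ := h
    refine ⟨x₀.1, fun x hx ↦ Sum.not_isLeft.1 fun hxl ↦ ?_⟩
    have hadj : (join ⊥ H).Adj (c x) (c x₀) := c.toHom.map_adj hx
    rw [← Sum.inl_getLeft _ hxl, ← Sum.inl_getLeft _ hx₀, join_adj_inl_inl] at hadj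
    exact hadj
  · push Not at h
    exact ⟨Classical.arbitrary ι, fun x _ ↦ Sum.not_isLeft.1 (h x)⟩

end Join

lemma copyCount_top_eq_card_cliqueSet [Fintype V] (G : SimpleGraph V) (k : ℕ) :
    _root_.copyCount (⊤ : SimpleGraph (Fin k)) G = Nat.card (G.cliqueSet k) := by
  classical
  refine Nat.card_congr
    { toFun H := ⟨H.1.verts.toFinset, ?_⟩
      invFun s := ⟨(⊤ : G.Subgraph).induce s, ?_⟩
      left_inv H := Subtype.ext ?_
      right_inv s := Subtype.ext <| by simp }
  · obtain ⟨φ⟩ := H.2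
    have htop := eq_top_of_isIndContained_top φ.isIndContained
    refine ⟨?_, ?_⟩
    · rw [Set.coe_toFinset]
      exact fun a ha b hb hab ↦ H.1.adj_sub (Subgraph.adj_of_coe_eq_top htop ha hb hab)
    · rw [Set.toFinset_card, Fintype.card_congr φ.toEquiv, Fintype.card_fin]
  · rw [s.2.1.coe_induce_eq_top]
    exact ⟨Iso.completeGraph (s.1.equivFinOfCardEq s.2.2)⟩
  · obtain ⟨φ⟩ := H.2
    simpa using (Subgraph.eq_induce_verts_of_coe_eq_top
      (eq_top_of_isIndContained_top φ.isIndContained)).symm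

lemma exists_copy_multipartite_castSucc {r : ℕ} {s : Fin (r + 1) → ℕ} (hs : Monotone s)
    (j : Fin (r + 1)) :
    ∃ d : Copy (multipartite r fun i ↦ s i.castSucc) (multipartite (r + 1) s),
      ∀ x, (d x).1 ≠ j := by
  have hle (i : Fin r) : s i.castSucc ≤ s (j.succAbove i) := hs <| by
    unfold Fin.succAbove; split_ifs; exacts [le_rfl, Fin.castSucc_le_succ i]
  let e := j.succAboveEmb.sigmaMap (β' := fun i ↦ Fin (s i)) fun i ↦ Fin.castLEEmb (hle i)
  exact ⟨⟨⟨e, fun hxy h ↦ hxy (Fin.succAbove_right_injective h)⟩, e.injective⟩,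
    fun x ↦ Fin.succAbove_ne j x.1⟩

theorem multipartite_free_join_bot {H : SimpleGraph β} {r : ℕ} {s : Fin (r + 1) → ℕ}
    (hs : Monotone s) (h : (multipartite r fun i ↦ s i.castSucc).Free H) :
    (multipartite (r + 1) s).Free (join (⊥ : SimpleGraph α) H) := by
  rintro ⟨c⟩
  obtain ⟨j, hj⟩ := exists_part_isRight_of_copy_join_bot c
  obtain ⟨d, hd⟩ := exists_copy_multipartite_castSucc hs j
  exact h (isContained_of_copy_join (c.comp d) fun x ↦ hj _ (hd x))

end SimpleGraph

section ExGen

variable {α β V W : Type*}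

lemma copyCount_le_of_copy [Finite W] (F : SimpleGraph α) {G : SimpleGraph V}
    {G' : SimpleGraph W} (f : Copy G G') : _root_.copyCount F G ≤ _root_.copyCount F G' :=
  Nat.card_le_card_of_injective
    (fun K ↦ ⟨K.1.map f.toHom, K.2.map (f.isoSubgraphMap K.1).symm.trans⟩)
    fun _ _ h ↦ Subtype.ext <| Subgraph.map_injective f.injective (congrArg Subtype.val h)

lemma bddAbove_copyCount_of_free (n : ℕ) (F : SimpleGraph α) (H : SimpleGraph β) :
    BddAbove {N | ∃ G : SimpleGraph (Fin n), _root_.Free H G ∧ _root_.copyCount F G = N} :=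
  ⟨_root_.copyCount F (⊤ : SimpleGraph (Fin n)), by
    rintro _ ⟨G, -, rfl⟩
    exact copyCount_le_of_copy F (Copy.ofLE G ⊤ le_top)⟩

lemma copyCount_le_exGen [Fintype V] {n : ℕ} (hV : Fintype.card V = n) {F : SimpleGraph α}
    {H : SimpleGraph β} {G : SimpleGraph V} (hG : _root_.Free H G) :
    _root_.copyCount F G ≤ exGen n F H := by
  let φ := Iso.map (Fintype.equivFinOfCardEq hV) G
  refine (copyCount_le_of_copy F φ.toCopy).trans (le_csSup (bddAbove_copyCount_of_free n F H) ?_)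
  refine ⟨_, free_iff_not_isContained.2 fun h ↦ ?_, rfl⟩
  exact free_iff_not_isContained.1 hG (h.trans φ.symm.isContained)

lemma exGen_eq_zero_or_exists (n : ℕ) (F : SimpleGraph α) (H : SimpleGraph β) :
    exGen n F H = 0 ∨
      ∃ G : SimpleGraph (Fin n), _root_.Free H G ∧ _root_.copyCount F G = exGen n F H := by
  rcases Set.eq_empty_or_nonempty
      {N | ∃ G : SimpleGraph (Fin n), _root_.Free H G ∧ _root_.copyCount F G = N} with h | h
  · left
    rw [exGen, h, csSup_empty, bot_eq_zero]
  · exact .inr (Nat.sSup_mem h (bddAbove_copyCount_of_free n F H))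

end ExGen

theorem exGen_multipartite_lower_general (r : ℕ) (hr : 3 ≤ r) (s : Fin r → ℕ)
    (hmono : Monotone s) (n : ℕ) :
    (n / 2) * exGen ((n + 1) / 2) (⊤ : SimpleGraph (Fin (r - 1)))
        (multipartite (r - 1) fun i => s (i.castLE (Nat.sub_le r 1))) ≤
      exGen n (⊤ : SimpleGraph (Fin r)) (multipartite r s) := by
  obtain ⟨r, rfl⟩ : ∃ r', r = r' + 1 := ⟨r - 1, by omega⟩
  show n / 2 * exGen ((n + 1) / 2) (⊤ : SimpleGraph (Fin r))
      (multipartite r fun i ↦ s i.castSucc) ≤ _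
  obtain h₀ | ⟨G₀, hG₀, hcount⟩ := exGen_eq_zero_or_exists ((n + 1) / 2)
    (⊤ : SimpleGraph (Fin r)) (multipartite r fun i ↦ s i.castSucc)
  · simp [h₀]
  have hfree : (multipartite (r + 1) s).Free (join (⊥ : SimpleGraph (Fin (n / 2))) G₀) :=
    multipartite_free_join_bot hmono (free_iff_not_isContained.1 hG₀)
  calc n / 2 * exGen ((n + 1) / 2) (⊤ : SimpleGraph (Fin r))
        (multipartite r fun i ↦ s i.castSucc)
      = Nat.card (Fin (n / 2)) * Nat.card (G₀.cliqueSet r) := by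
        rw [← hcount, copyCount_top_eq_card_cliqueSet, Nat.card_fin]
    _ ≤ Nat.card ((join ⊥ G₀).cliqueSet (r + 1)) :=
        card_mul_card_cliqueSet_le_card_cliqueSet_join ⊥ G₀ r
    _ = _root_.copyCount (⊤ : SimpleGraph (Fin (r + 1))) (join ⊥ G₀) :=
        (copyCount_top_eq_card_cliqueSet _ _).symm
    _ ≤ exGen n (⊤ : SimpleGraph (Fin (r + 1))) (multipartite (r + 1) s) :=
        copyCount_le_exGen (by simp; omega) (free_iff_not_isContained.2 hfree)

/-- Proposition 1.2: for `r ≥ 3` and positive integers `s_1 ≤ ⋯ ≤ s_r`,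
`ex(n, K_r, K_{s_1,…,s_r}) ≥ ⌊n/2⌋ ⬝ ex(⌈n/2⌉, K_{r-1}, K_{s_1,…,s_{r-1}})`. -/
theorem exGen_multipartite_lower (r : ℕ) (hr : 3 ≤ r) (s : Fin r → ℕ)
    (hpos : ∀ i, 1 ≤ s i) (hmono : Monotone s) (n : ℕ) :
    (n / 2) * exGen ((n + 1) / 2) (⊤ : SimpleGraph (Fin (r - 1)))
        (multipartite (r - 1) fun i => s (i.castLE (Nat.sub_le r 1))) ≤
      exGen n (⊤ : SimpleGraph (Fin r)) (multipartite r s) :=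
  exGen_multipartite_lower_general r hr s hmono n
end

section
/- Let a ≥ 1, s ≥ 1 be integers and f_1,…,f_a, N nonnegative reals with ∑_{i=1}^a f_i ≥ N and N ≥ 4sa. Let B = {i : f_i ≥ s}. Then ∑_{i ∈ B} (f_i − s + 1)^s ≥ N^s / (2^s · a^{s−1}). -/
open Finset

/-! Every `i` with `f i < s` contributes a negative amount to `∑ (f i - s)`, so discarding these
indices and adding `1` to each remaining term keeps at least `∑ f i - s a ≥ N / 2` of the mass.
The power mean inequality over the at most `a` surviving indices then turns this into the bound
on the sum of `s`-th powers. -/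

lemma sum_sub_mul_card_le_sum_filter_sub_add_one {ι : Type*} [Fintype ι] (f : ι → ℝ) (t : ℝ) :
    ∑ i, f i - t * Fintype.card ι ≤ ∑ i ∈ univ.filter (fun i => t ≤ f i), (f i - t + 1) := by
  rw [sum_filter, ← card_univ, mul_comm, ← nsmul_eq_mul, ← sum_const, ← sum_sub_distrib]
  refine sum_le_sum fun i _ => ?_
  split_ifs with h <;> linarith

lemma pow_sum_div_pow_le_sum_pow {ι : Type*} {B : Finset ι} {g : ι → ℝ}
    (hg : ∀ i ∈ B, 0 ≤ g i) {a : ℝ} (hBa : (#B : ℝ) ≤ a) {s : ℕ} (hs : s ≠ 0) :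
    (∑ i ∈ B, g i) ^ s / a ^ (s - 1) ≤ ∑ i ∈ B, g i ^ s := by
  obtain ⟨n, rfl⟩ := Nat.exists_eq_add_one_of_ne_zero hs
  rcases B.eq_empty_or_nonempty with rfl | hB
  · simp
  have hcard : (0 : ℝ) < #B := by exact_mod_cast hB.card_pos
  calc (∑ i ∈ B, g i) ^ (n + 1) / a ^ (n + 1 - 1)
      ≤ (∑ i ∈ B, g i) ^ (n + 1) / (#B : ℝ) ^ n := by
        rw [Nat.add_sub_cancel]
        exact div_le_div_of_nonneg_left (pow_nonneg (sum_nonneg hg) _) (by positivity)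
          (pow_le_pow_left₀ hcard.le hBa n)
    _ ≤ ∑ i ∈ B, g i ^ (n + 1) := pow_sum_div_card_le_sum_pow hg n

theorem averaging_estimate_general (a s : ℕ) (hs : 1 ≤ s)
    (f : Fin a → ℝ) (N : ℝ)
    (hsum : N ≤ ∑ i, f i) (hNbig : 4 * s * a ≤ N) :
    N ^ s / (2 ^ s * (a : ℝ) ^ (s - 1)) ≤
      ∑ i ∈ Finset.univ.filter (fun i => (s : ℝ) ≤ f i), (f i - s + 1) ^ s := by
  set B := univ.filter (fun i => (s : ℝ) ≤ f i)
  have hsa : (0 : ℝ) ≤ s * a := by positivity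
  have hmass : N / 2 ≤ ∑ i ∈ B, (f i - s + 1) := by
    have := sum_sub_mul_card_le_sum_filter_sub_add_one f s
    rw [Fintype.card_fin] at this
    linarith
  have hB : (#B : ℝ) ≤ a := by exact_mod_cast (card_filter_le _ _).trans (card_fin a).le
  have hg : ∀ i ∈ B, 0 ≤ f i - s + 1 := fun i hi => by
    have := (mem_filter.mp hi).2
    linarith
  calc N ^ s / (2 ^ s * (a : ℝ) ^ (s - 1)) = (N / 2) ^ s / (a : ℝ) ^ (s - 1) := by
        rw [div_pow, div_div]
    _ ≤ (∑ i ∈ B, (f i - s + 1)) ^ s / (a : ℝ) ^ (s - 1) := by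
        gcongr
        linarith
    _ ≤ ∑ i ∈ B, (f i - s + 1) ^ s := pow_sum_div_pow_le_sum_pow hg hB (by omega)

/-- The key averaging estimate: if `f 1, …, f a` and `N` are nonnegative reals with
`∑ f i ≥ N` and `N ≥ 4 s a`, and `B = {i : f i ≥ s}`, then
`∑_{i ∈ B} (f i - s + 1)^s ≥ N^s / (2^s a^(s-1))`. -/
theorem averaging_estimate (a s : ℕ) (ha : 1 ≤ a) (hs : 1 ≤ s)
    (f : Fin a → ℝ) (hf : ∀ i, 0 ≤ f i) (N : ℝ) (hN : 0 ≤ N)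
    (hsum : N ≤ ∑ i, f i) (hNbig : 4 * s * a ≤ N) :
    N ^ s / (2 ^ s * (a : ℝ) ^ (s - 1)) ≤
      ∑ i ∈ Finset.univ.filter (fun i => (s : ℝ) ≤ f i), (f i - s + 1) ^ s :=
  averaging_estimate_general a s hs f N hsum hNbig
end

section
/- For every r ≥ 4, ex(n, K_{r+1}, K_{1,…,1,2,2}) ≤ ex(n, K_r, K_{1,…,1,2,2}), where K_{1,…,1,2,2} denotes the complete r-partite graph with r−2 parts of size 1 and two parts of size 2; in a graph free of this K_{1,…,1,2,2}, every copy of K_r lies in at most one copy of K_{r+1}. -/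
/-! If an `r`-clique `T` lies in two distinct `(r+1)`-cliques `T ∪ {u}` and `T ∪ {w}`, send one
doubled part of `K_{1,…,1,2,2}` to `{u, w}` and the remaining `r` vertices bijectively to `T`:
the only possible non-edge `uw` then lies inside a part, so this is a copy of `K_{1,…,1,2,2}`.
In a free graph every `r`-clique therefore extends to at most one `(r+1)`-clique; since every
`(r+1)`-clique contains an `r`-clique and copies of `K_k` are exactly the `k`-cliques, double
counting gives `#K_{r+1} ≤ #K_r` graph by graph. -/

open SimpleGraph Finset

section Cliques

variable {V : Type*} {G : SimpleGraph V}

theorem nonempty_iso_top_iff_exists_isNClique [Fintype V] {H : G.Subgraph} {k : ℕ} :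
    Nonempty (H.coe ≃g (⊤ : SimpleGraph (Fin k))) ↔
      ∃ s : Finset V, G.IsNClique k s ∧ (⊤ : G.Subgraph).induce s = H := by
  classical
  constructor
  · rintro ⟨e⟩
    have hadj : ∀ a b, H.Adj a b ↔ a ∈ H.verts ∧ b ∈ H.verts ∧ a ≠ b := by
      refine fun a b => ⟨fun h => ⟨H.edge_vert h, H.edge_vert h.symm, (H.adj_sub h).ne⟩, ?_⟩
      rintro ⟨ha, hb, hab⟩
      show H.coe.Adj ⟨a, ha⟩ ⟨b, hb⟩
      rw [← e.map_adj_iff, top_adj, e.injective.ne_iff]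
      exact fun h => hab (congrArg Subtype.val h)
    refine ⟨H.verts.toFinset, ⟨?_, ?_⟩, ?_⟩
    · intro a ha b hb hab
      simp only [Set.coe_toFinset] at ha hb
      exact H.adj_sub ((hadj a b).2 ⟨ha, hb, hab⟩)
    · rw [Set.toFinset_card, Fintype.card_congr e.toEquiv, Fintype.card_fin]
    · ext a b
      · simp
      · simp only [Set.coe_toFinset, Subgraph.induce_adj, Subgraph.top_adj, hadj]
        exact ⟨fun ⟨ha, hb, h⟩ => ⟨ha, hb, h.ne⟩,
          fun ⟨ha, hb, h⟩ => ⟨ha, hb, H.adj_sub ((hadj a b).2 ⟨ha, hb, h⟩)⟩⟩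
  · rintro ⟨s, hs, rfl⟩
    rw [← induce_eq_coe_induce_top, induce_eq_top.mpr hs.isClique]
    exact ⟨Iso.completeGraph (s.equivFinOfCardEq hs.card_eq)⟩

theorem copyCount_top_eq_card_cliqueFinset [Fintype V] [DecidableEq V] [DecidableRel G.Adj]
    (k : ℕ) : _root_.copyCount (⊤ : SimpleGraph (Fin k)) G = #(G.cliqueFinset k) := by
  have hinj : Function.Injective fun s : Finset V => (⊤ : G.Subgraph).induce (s : Set V) :=
    fun s t h => Finset.coe_injective (congrArg Subgraph.verts h)
  rw [_root_.copyCount, ← Set.ncard_coe_finset, ← Set.ncard_image_of_injective _ hinj,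
    ← Nat.card_coe_set_eq]
  refine Nat.card_congr (Equiv.subtypeEquivRight fun H => ?_)
  simp [nonempty_iso_top_iff_exists_isNClique]

theorem card_cliqueFinset_succ_le [Fintype V] [DecidableEq V] [DecidableRel G.Adj] {k : ℕ}
    (h : ∀ T : Finset V, G.IsNClique k T →
      {S : Finset V | G.IsNClique (k + 1) S ∧ T ⊆ S}.Subsingleton) :
    #(G.cliqueFinset (k + 1)) ≤ #(G.cliqueFinset k) := by
  refine card_le_card_of_forall_subsingleton (fun S T => T ⊆ S) (fun S hS => ?_) (fun T hT => ?_)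
  · rw [mem_cliqueFinset_iff] at hS
    obtain ⟨a, ha⟩ : S.Nonempty := by rw [← card_pos, hS.card_eq]; omega
    exact ⟨S.erase a, mem_cliqueFinset_iff.2 (hS.erase_of_mem ha), erase_subset a S⟩
  · refine (h T (mem_cliqueFinset_iff.1 hT)).anti fun S hS => ?_
    simpa using hS

theorem SimpleGraph.IsNClique.exists_eq_insert_of_subset [DecidableEq V] {k : ℕ}
    {S T : Finset V} (hT : G.IsNClique k T) (hS : G.IsNClique (k + 1) S) (hTS : T ⊆ S) :
    ∃ u ∉ T, insert u T = S ∧ ∀ t ∈ T, G.Adj u t := by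
  obtain ⟨u, huT, rfl⟩ := exists_eq_insert_iff.2 ⟨hTS, by rw [hT.card_eq, hS.card_eq]⟩
  have := hS.isClique
  rw [coe_insert, isClique_insert] at this
  exact ⟨u, huT, rfl, fun t ht => this.2 t ht fun h => huT (h ▸ ht)⟩

end Cliques

theorem not_free_of_isContained {α β : Type*} {H : SimpleGraph α} {G : SimpleGraph β}
    (h : H ⊑ G) : ¬ _root_.Free H G :=
  fun hfree => let ⟨c⟩ := h; hfree ⟨c.toEmbedding, fun _ _ hab => c.toHom.map_adj hab⟩

theorem exGen_le_exGen_of_copyCount_le {α β γ : Type*} {n : ℕ} {F : SimpleGraph α}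
    {F' : SimpleGraph β} {H : SimpleGraph γ}
    (h : ∀ G : SimpleGraph (Fin n),
      _root_.Free H G → _root_.copyCount F G ≤ _root_.copyCount F' G) :
    exGen n F H ≤ exGen n F' H := by
  have hbdd : BddAbove
      {N | ∃ G : SimpleGraph (Fin n), _root_.Free H G ∧ _root_.copyCount F' G = N} := by
    refine (Set.Finite.subset (Set.finite_range fun G : SimpleGraph (Fin n) =>
      _root_.copyCount F' G) ?_).bddAbove
    rintro _ ⟨G, -, rfl⟩
    exact ⟨G, rfl⟩
  exact csSup_le' fun _ ⟨G, hG, hN⟩ => hN ▸ (h G hG).trans (le_csSup hbdd ⟨G, hG, rfl⟩)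

section Multipartite

variable {V ι : Type*} {G : SimpleGraph V} [DecidableEq ι] {β : ι → Type*}

theorem completeMultipartiteGraph_isContained_of_embedding (p : ι) (f : β p ↪ V)
    (g : {x : Σ i, β i // x.1 ≠ p} ↪ V) (hg : G.IsClique (Set.range g))
    (hfg : ∀ b x, G.Adj (f b) (g x)) : completeMultipartiteGraph β ⊑ G := by
  let φ : (Σ i, β i) → V := fun x => if h : x.1 = p then f (h ▸ x.2) else g ⟨x, h⟩
  have hφp : ∀ b, φ ⟨p, b⟩ = f b := fun b => dif_pos rfl
  have hφ : ∀ x (h : x.1 ≠ p), φ x = g ⟨x, h⟩ := fun x h => dif_neg h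
  have hφinj : Function.Injective φ := by
    rintro ⟨i, b⟩ ⟨j, c⟩ hbc
    by_cases hi : i = p <;> by_cases hj : j = p
    · subst hi hj
      rw [hφp, hφp] at hbc
      rw [f.injective hbc]
    · subst hi
      rw [hφp, hφ _ hj] at hbc
      exact absurd hbc (hfg _ _).ne
    · subst hj
      rw [hφp, hφ _ hi] at hbc
      exact absurd hbc.symm (hfg _ _).ne
    · rw [hφ _ hi, hφ _ hj] at hbc
      exact congrArg Subtype.val (g.injective hbc)
  refine isContained_iff_exists_le_comap.2 ⟨⟨φ, hφinj⟩, fun x y hxy => ?_⟩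
  obtain ⟨i, b⟩ := x
  obtain ⟨j, c⟩ := y
  have hij : i ≠ j := hxy
  show G.Adj (φ ⟨i, b⟩) (φ ⟨j, c⟩)
  by_cases hi : i = p
  · subst hi
    rw [hφp, hφ _ hij.symm]
    exact hfg _ _
  by_cases hj : j = p
  · subst hj
    rw [hφp, hφ _ hi]
    exact (hfg _ _).symm
  rw [hφ _ hi, hφ _ hj]
  exact hg (Set.mem_range_self _) (Set.mem_range_self _)
    (g.injective.ne fun h => hij (congrArg (·.1.1) h))

theorem completeMultipartiteGraph_isContained_of_card_le [∀ i, Fintype (β i)]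
    [Fintype (Σ i, β i)] (p : ι) {U T : Finset V} (hT : G.IsClique (T : Set V))
    (hUT : ∀ u ∈ U, ∀ t ∈ T, G.Adj u t) (hU : Fintype.card (β p) ≤ #U)
    (hT' : Fintype.card {x : Σ i, β i // x.1 ≠ p} ≤ #T) :
    completeMultipartiteGraph β ⊑ G := by
  obtain ⟨f⟩ := Function.Embedding.nonempty_of_card_le (hU.trans_eq (Fintype.card_coe U).symm)
  obtain ⟨g⟩ := Function.Embedding.nonempty_of_card_le (hT'.trans_eq (Fintype.card_coe T).symm)
  refine completeMultipartiteGraph_isContained_of_embedding p (f.trans (.subtype _))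
    (g.trans (.subtype _)) (hT.subset ?_) fun b x => hUT _ (f b).2 _ (g x).2
  rintro _ ⟨x, rfl⟩
  exact (g x).2

end Multipartite

section K1122

variable {V : Type*} {G : SimpleGraph V}

theorem card_sigma_fin_k1122 {r : ℕ} (hr : 2 ≤ r) :
    Fintype.card (Σ i : Fin r, Fin (if (i : ℕ) < r - 2 then 1 else 2)) = r + 2 := by
  rw [Fintype.card_sigma]
  simp only [Fintype.card_fin]
  rw [Fin.sum_univ_eq_sum_range (fun i => if i < r - 2 then 1 else 2) r]
  obtain ⟨m, rfl⟩ : ∃ m, r = m + 2 := ⟨r - 2, by omega⟩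
  simp only [Finset.sum_range_succ, Nat.add_sub_cancel]
  rw [Finset.sum_congr rfl fun i hi => if_pos (mem_range.mp hi)]
  simp

theorem k1122_isContained_of_common_neighbors {r : ℕ} (hr : 2 ≤ r) {T : Finset V}
    (hT : G.IsNClique r T) {u w : V} (huw : u ≠ w) (hu : ∀ t ∈ T, G.Adj u t)
    (hw : ∀ t ∈ T, G.Adj w t) :
    (multipartite r fun i => if (i : ℕ) < r - 2 then 1 else 2) ⊑ G := by
  classical
  let p : Fin r := ⟨r - 2, by omega⟩
  have hp : Fintype.card (Fin (if (p : ℕ) < r - 2 then 1 else 2)) = 2 := by simp [p]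
  refine completeMultipartiteGraph_isContained_of_card_le p (U := {u, w}) hT.isClique
    (by simpa using ⟨hu, hw⟩) (by rw [hp, card_pair huw]) ?_
  rw [Fintype.card_subtype_compl, Fintype.card_congr (Equiv.sigmaSubtype p), hp,
    card_sigma_fin_k1122 hr, hT.card_eq]
  omega

theorem subsingleton_cliques_superset_of_free {r : ℕ} (hr : 2 ≤ r)
    (hG : _root_.Free (multipartite r fun i => if (i : ℕ) < r - 2 then 1 else 2) G)
    {T : Finset V} (hT : G.IsNClique r T) :
    {S : Finset V | G.IsNClique (r + 1) S ∧ T ⊆ S}.Subsingleton := by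
  classical
  rintro _ ⟨hS₁, hTS₁⟩ _ ⟨hS₂, hTS₂⟩
  obtain ⟨u, -, rfl, hu⟩ := hT.exists_eq_insert_of_subset hS₁ hTS₁
  obtain ⟨w, -, rfl, hw⟩ := hT.exists_eq_insert_of_subset hS₂ hTS₂
  by_contra hne
  have huw : u ≠ w := fun huw => hne (congrArg (insert · T) huw)
  exact not_free_of_isContained (k1122_isContained_of_common_neighbors hr hT huw hu hw) hG

end K1122

/-- For `r ≥ 4`, with `K_{1,…,1,2,2}` the complete `r`-partite graph with `r - 2`
singleton parts and two parts of size `2`: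
`ex(n, K_{r+1}, K_{1,…,1,2,2}) ≤ ex(n, K_r, K_{1,…,1,2,2})`, and in a
`K_{1,…,1,2,2}`-free graph every copy of `K_r` lies in at most one copy of `K_{r+1}`. -/
theorem exGen_k1122_step (r n : ℕ) (hr : 4 ≤ r) :
    exGen n (⊤ : SimpleGraph (Fin (r + 1)))
        (multipartite r fun i => if (i : ℕ) < r - 2 then 1 else 2) ≤
      exGen n (⊤ : SimpleGraph (Fin r))
        (multipartite r fun i => if (i : ℕ) < r - 2 then 1 else 2) ∧
    ∀ (V : Type) (G : SimpleGraph V),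
      _root_.Free (multipartite r fun i => if (i : ℕ) < r - 2 then 1 else 2) G →
        ∀ T : Finset V, G.IsNClique r T →
          {S : Finset V | G.IsNClique (r + 1) S ∧ T ⊆ S}.Subsingleton := by
  have hr₂ : 2 ≤ r := by omega
  refine ⟨exGen_le_exGen_of_copyCount_le fun G hG => ?_,
    fun V G hG T hT => subsingleton_cliques_superset_of_free hr₂ hG hT⟩
  classical
  rw [copyCount_top_eq_card_cliqueFinset, copyCount_top_eq_card_cliqueFinset]
  exact card_cliqueFinset_succ_le fun T hT => subsingleton_cliques_superset_of_free hr₂ hG hT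
end
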